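/- Let N ≥ 1 be an integer, a₁, …, a_N ∈ ℝ, τ ∈ ℝ, and let p, q : ℝ → ℂ^N be C^∞ functions of the variable s. In (1,N)-block form, define the (N+1)×(N+1) complex matrices A₁ := (1/(N+1))·diag(−N, 1, …, 1); A₀(s) := [[0, p(s)ᵀ], [−q(s), 0]]; A(μ,s) := μ·A₁ + A₀(s); B̃₀ := (1/(N+1))·diag(−Σ_{j=1}^N a_j, (N+1)a₁ − Σ_{j=1}^N a_j, …, (N+1)a_N − Σ_{j=1}^N a_j); B₁(s) := [[p(s)ᵀq(s), ∂_s p(s)ᵀ], [∂_s q(s), −q(s)·p(s)ᵀ]]; B₀(s) := [[p(s)ᵀ∂_s q(s) − ∂_s p(s)ᵀ q(s), −∂_{ss} p(s)ᵀ − 2(p(s)ᵀq(s))·p(s)ᵀ + τ·p(s)ᵀ], [∂_{ss} q(s) + 2(p(s)ᵀq(s))·q(s) − τ·q(s), q(s)·∂_s p(s)ᵀ − ∂_s q(s)·p(s)ᵀ]]; and B(μ,s) := −μ³·A₁ − μ²·A₀(s) + μ·(τ·A₁ + B₁(s)) + s·A₁ + B̃₀ + B₀(s). Then the zero-curvature (compatibility)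 equation ∂_s B(μ,s) − ∂_μ A(μ,s) = A(μ,s)·B(μ,s) − B(μ,s)·A(μ,s) holds for all μ ∈ ℂ and all s ∈ ℝ if and only if p and q satisfy, for all s ∈ ℝ, the coupled third-order system ∂_{sss} p + 3(∂_s pᵀ q)·p + 3(pᵀq)·∂_s p − τ·∂_s p + D(s)·p = 0 and ∂_{sss} q + 3(pᵀ ∂_s q)·q + 3(pᵀq)·∂_s q − τ·∂_s q − D(s)·q = 0, where D(s) := diag(a₁+s, …, a_N+s). -/

import Mathlib

open Matrix BigOperators

namespace PearceyLax

variable (N : ℕ)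

/-- `A₁ = (1/(N+1)) diag(−N, 1, …, 1)` in `(1,N)`-block form. -/
noncomputable def A1 : Matrix (Fin 1 ⊕ Fin N) (Fin 1 ⊕ Fin N) ℂ :=
  (((N : ℂ) + 1)⁻¹) • Matrix.fromBlocks ((-(N : ℂ)) • 1) 0 0 1

/-- `A₀(s) = [[0, p(s)ᵀ], [−q(s), 0]]`. -/
noncomputable def A0 (p q : ℝ → Fin N → ℂ) (s : ℝ) :
    Matrix (Fin 1 ⊕ Fin N) (Fin 1 ⊕ Fin N) ℂ :=
  Matrix.fromBlocks 0 (Matrix.of fun _ j => p s j) (Matrix.of fun i _ => -(q s i)) 0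

/-- `A(μ,s) = μ A₁ + A₀(s)`. -/
noncomputable def A (p q : ℝ → Fin N → ℂ) (μ : ℂ) (s : ℝ) :
    Matrix (Fin 1 ⊕ Fin N) (Fin 1 ⊕ Fin N) ℂ :=
  μ • A1 N + A0 N p q s

/-- `B̃₀ = (1/(N+1)) diag(−Σ aⱼ, (N+1)a₁ − Σ aⱼ, …, (N+1)a_N − Σ aⱼ)`. -/
noncomputable def Btilde0 (a : Fin N → ℝ) :
    Matrix (Fin 1 ⊕ Fin N) (Fin 1 ⊕ Fin N) ℂ :=
  Matrix.fromBlocks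
    (Matrix.of fun _ _ => (-(∑ j, (a j : ℂ))) / ((N : ℂ) + 1)) 0 0
    (Matrix.diagonal fun i => (((N : ℂ) + 1) * (a i : ℂ) - ∑ j, (a j : ℂ)) / ((N : ℂ) + 1))

/-- `B₁(s) = [[pᵀq, ∂ₛpᵀ], [∂ₛq, −q pᵀ]]`. -/
noncomputable def B1 (p q : ℝ → Fin N → ℂ) (s : ℝ) :
    Matrix (Fin 1 ⊕ Fin N) (Fin 1 ⊕ Fin N) ℂ :=
  Matrix.fromBlocks
    (Matrix.of fun _ _ => ∑ j, p s j * q s j)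
    (Matrix.of fun _ j => deriv p s j)
    (Matrix.of fun i _ => deriv q s i)
    (Matrix.of fun i j => -(q s i * p s j))

/-- `B₀(s) = [[pᵀ∂ₛq − ∂ₛpᵀ q, −∂ₛₛpᵀ − 2(pᵀq)pᵀ + τpᵀ],
              [∂ₛₛq + 2(pᵀq)q − τq, q ∂ₛpᵀ − ∂ₛq pᵀ]]`. -/
noncomputable def B0 (τ : ℝ) (p q : ℝ → Fin N → ℂ) (s : ℝ) :
    Matrix (Fin 1 ⊕ Fin N) (Fin 1 ⊕ Fin N) ℂ :=
  Matrix.fromBlocks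
    (Matrix.of fun _ _ => ∑ j, (p s j * deriv q s j - deriv p s j * q s j))
    (Matrix.of fun _ j =>
      -(deriv (deriv p) s j) - 2 * (∑ i, p s i * q s i) * p s j + (τ : ℂ) * p s j)
    (Matrix.of fun i _ =>
      deriv (deriv q) s i + 2 * (∑ j, p s j * q s j) * q s i - (τ : ℂ) * q s i)
    (Matrix.of fun i j => q s i * deriv p s j - deriv q s i * p s j)

/-- `B(μ,s) = −μ³A₁ − μ²A₀(s) + μ(τA₁ + B₁(s)) + sA₁ + B̃₀ + B₀(s)`. -/
noncomputable def B (a : Fin N → ℝ) (τ : ℝ) (p q : ℝ → Fin N → ℂ) (μ : ℂ) (s : ℝ) :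
    Matrix (Fin 1 ⊕ Fin N) (Fin 1 ⊕ Fin N) ℂ :=
  (-(μ ^ 3)) • A1 N + (-(μ ^ 2)) • A0 N p q s + μ • ((τ : ℂ) • A1 N + B1 N p q s)
    + (s : ℂ) • A1 N + Btilde0 N a + B0 N τ p q s

private lemma coordD {N : ℕ} (f : ℝ → Fin N → ℂ) (hf : Differentiable ℝ f) (s : ℝ) (j : Fin N) :
    HasDerivAt (fun u => f u j) (deriv f s j) s :=
  hasDerivAt_pi.mp (hf s).hasDerivAt j

private lemma hasDerivAt_ofReal' (s : ℝ) : HasDerivAt (fun u : ℝ => (u : ℂ)) 1 s := by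
  exact Complex.ofRealCLM.hasDerivAt (x := s)

section Deriv

variable {N : ℕ} (a : Fin N → ℝ) (τ : ℝ) (p q : ℝ → Fin N → ℂ)
  (hp0 : Differentiable ℝ p) (hp1 : Differentiable ℝ (deriv p))
  (hp2 : Differentiable ℝ (deriv (deriv p)))
  (hq0 : Differentiable ℝ q) (hq1 : Differentiable ℝ (deriv q))
  (hq2 : Differentiable ℝ (deriv (deriv q)))

include hp0 hq0 hp1 hq1 in
private lemma derivB_tl (μ : ℂ) (s : ℝ) :
    deriv (fun u => B N a τ p q μ u (Sum.inl 0) (Sum.inl 0)) s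
      = μ * ((∑ i, deriv p s i * q s i) + (∑ i, p s i * deriv q s i))
        + ((∑ i, p s i * deriv (deriv q) s i) - (∑ i, deriv (deriv p) s i * q s i))
        + (-(N:ℂ)) * ((N:ℂ)+1)⁻¹ := by
  have hfun : (fun u => B N a τ p q μ u (Sum.inl 0) (Sum.inl 0))
      = fun u => μ * (∑ i, p u i * q u i)
          + (∑ i, (p u i * deriv q u i - deriv p u i * q u i))
          + ((u:ℂ) * (-(N:ℂ) * ((N:ℂ)+1)⁻¹)
            + (-μ^3 * (-(N:ℂ) * ((N:ℂ)+1)⁻¹) + μ * ((τ:ℂ) * (-(N:ℂ) * ((N:ℂ)+1)⁻¹))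
              + (-(∑ k, ((a k : ℝ):ℂ)))/((N:ℂ)+1))) := by
    funext u
    simp [B, A1, A0, B1, B0, Btilde0, Matrix.add_apply, Matrix.smul_apply, smul_eq_mul]
    ring
  rw [hfun]
  have h1 : HasDerivAt (fun u => ∑ i, p u i * q u i)
      (∑ i, (deriv p s i * q s i + p s i * deriv q s i)) s :=
    HasDerivAt.fun_sum fun i _ => (coordD p hp0 s i).fun_mul (coordD q hq0 s i)
  have h2 : HasDerivAt (fun u => ∑ i, (p u i * deriv q u i - deriv p u i * q u i))
      (∑ i, ((deriv p s i * deriv q s i + p s i * deriv (deriv q) s i)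
        - (deriv (deriv p) s i * q s i + deriv p s i * deriv q s i))) s :=
    HasDerivAt.fun_sum fun i _ => ((coordD p hp0 s i).fun_mul (coordD (deriv q) hq1 s i)).fun_sub
      ((coordD (deriv p) hp1 s i).fun_mul (coordD q hq0 s i))
  rw [(((h1.const_mul μ).fun_add h2).fun_add
    (((hasDerivAt_ofReal' s).mul_const (-(N:ℂ) * ((N:ℂ)+1)⁻¹)).add_const _)).deriv]
  simp only [Finset.sum_add_distrib, Finset.sum_sub_distrib]
  ring


include hp0 hq0 hp1 hp2 in
private lemma derivB_tr (μ : ℂ) (s : ℝ) (j : Fin N) :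
    deriv (fun u => B N a τ p q μ u (Sum.inl 0) (Sum.inr j)) s
      = -μ^2 * deriv p s j + μ * deriv (deriv p) s j - deriv (deriv (deriv p)) s j
        - 2 * ((∑ i, deriv p s i * q s i) + (∑ i, p s i * deriv q s i)) * p s j
        - 2 * (∑ i, p s i * q s i) * deriv p s j + (τ:ℂ) * deriv p s j := by
  have hfun : (fun u => B N a τ p q μ u (Sum.inl 0) (Sum.inr j))
      = fun u => -μ^2 * p u j + μ * deriv p u j
          + (-(deriv (deriv p) u j) - 2 * (∑ i, p u i * q u i) * p u j + (τ:ℂ) * p u j) := by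
    funext u
    simp [B, A1, A0, B1, B0, Btilde0, Matrix.add_apply, Matrix.smul_apply, smul_eq_mul]
  rw [hfun]
  have h1 : HasDerivAt (fun u => ∑ i, p u i * q u i)
      (∑ i, (deriv p s i * q s i + p s i * deriv q s i)) s :=
    HasDerivAt.fun_sum fun i _ => (coordD p hp0 s i).fun_mul (coordD q hq0 s i)
  rw [((((coordD p hp0 s j).const_mul (-μ^2)).fun_add ((coordD (deriv p) hp1 s j).const_mul μ)).fun_add
    ((((coordD (deriv (deriv p)) hp2 s j).fun_neg).fun_sub ((h1.const_mul 2).fun_mul (coordD p hp0 s j))).fun_add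
      ((coordD p hp0 s j).const_mul (τ:ℂ)))).deriv]
  simp only [Finset.sum_add_distrib]
  ring

include hq0 hp0 hq1 hq2 in
private lemma derivB_bl (μ : ℂ) (s : ℝ) (i : Fin N) :
    deriv (fun u => B N a τ p q μ u (Sum.inr i) (Sum.inl 0)) s
      = μ^2 * deriv q s i + μ * deriv (deriv q) s i + deriv (deriv (deriv q)) s i
        + 2 * ((∑ k, deriv p s k * q s k) + (∑ k, p s k * deriv q s k)) * q s i
        + 2 * (∑ k, p s k * q s k) * deriv q s i - (τ:ℂ) * deriv q s i := by
  have hfun : (fun u => B N a τ p q μ u (Sum.inr i) (Sum.inl 0))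
      = fun u => -μ^2 * (-(q u i)) + μ * deriv q u i
          + (deriv (deriv q) u i + 2 * (∑ k, p u k * q u k) * q u i - (τ:ℂ) * q u i) := by
    funext u
    simp [B, A1, A0, B1, B0, Btilde0, Matrix.add_apply, Matrix.smul_apply, smul_eq_mul]
  rw [hfun]
  have h1 : HasDerivAt (fun u => ∑ k, p u k * q u k)
      (∑ k, (deriv p s k * q s k + p s k * deriv q s k)) s :=
    HasDerivAt.fun_sum fun k _ => (coordD p hp0 s k).fun_mul (coordD q hq0 s k)
  rw [((((coordD q hq0 s i).fun_neg.const_mul (-μ^2)).fun_add ((coordD (deriv q) hq1 s i).const_mul μ)).fun_add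
    (((coordD (deriv (deriv q)) hq2 s i).fun_add ((h1.const_mul 2).fun_mul (coordD q hq0 s i))).fun_sub
      ((coordD q hq0 s i).const_mul (τ:ℂ)))).deriv]
  simp only [Finset.sum_add_distrib]
  ring

include hp0 hq0 hp1 hq1 in
private lemma derivB_br (μ : ℂ) (s : ℝ) (i j : Fin N) :
    deriv (fun u => B N a τ p q μ u (Sum.inr i) (Sum.inr j)) s
      = (if i = j then ((N:ℂ)+1)⁻¹ else 0)
        - μ * (deriv q s i * p s j) - μ * (q s i * deriv p s j)
        + q s i * deriv (deriv p) s j - deriv (deriv q) s i * p s j := by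
  rcases eq_or_ne i j with rfl | hij
  · have hfun : (fun u => B N a τ p q μ u (Sum.inr i) (Sum.inr i))
        = fun u : ℝ => (u:ℂ) * ((N:ℂ)+1)⁻¹
            + (-μ^3 * ((N:ℂ)+1)⁻¹ + μ * ((τ:ℂ) * ((N:ℂ)+1)⁻¹)
              + (((N:ℂ)+1) * ((a i : ℝ):ℂ) - (∑ k, ((a k : ℝ):ℂ)))/((N:ℂ)+1))
            + μ * (-(q u i * p u i)) + (q u i * deriv p u i - deriv q u i * p u i) := by
      funext u
      simp [B, A1, A0, B1, B0, Btilde0, Matrix.add_apply, Matrix.smul_apply, smul_eq_mul,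
        Matrix.diagonal_apply, Matrix.one_apply]
      ring
    rw [hfun]
    rw [(((((hasDerivAt_ofReal' s).mul_const (((N:ℂ)+1)⁻¹)).add_const _).fun_add
      (((coordD q hq0 s i).fun_mul (coordD p hp0 s i)).fun_neg.const_mul μ)).fun_add
      (((coordD q hq0 s i).fun_mul (coordD (deriv p) hp1 s i)).fun_sub
        ((coordD (deriv q) hq1 s i).fun_mul (coordD p hp0 s i)))).deriv]
    simp only [if_pos rfl, eq_self_iff_true, if_true]
    ring
  · have hfun : (fun u => B N a τ p q μ u (Sum.inr i) (Sum.inr j))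
        = fun u => μ * (-(q u i * p u j)) + (q u i * deriv p u j - deriv q u i * p u j) := by
      funext u
      simp [B, A1, A0, B1, B0, Btilde0, Matrix.add_apply, Matrix.smul_apply, smul_eq_mul,
        Matrix.diagonal_apply, Matrix.one_apply, hij]
    rw [hfun]
    rw [((((coordD q hq0 s i).fun_mul (coordD p hp0 s j)).fun_neg.const_mul μ).fun_add
      (((coordD q hq0 s i).fun_mul (coordD (deriv p) hp1 s j)).fun_sub
        ((coordD (deriv q) hq1 s i).fun_mul (coordD p hp0 s j)))).deriv]
    simp only [if_neg hij]
    ring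

private lemma derivA (μ : ℂ) (s : ℝ) (i j : Fin 1 ⊕ Fin N) :
    deriv (fun z => A N p q z s i j) μ = A1 N i j := by
  have hfun : (fun z => A N p q z s i j) = fun z => z * A1 N i j + A0 N p q s i j := by
    funext z
    simp [A, Matrix.add_apply, Matrix.smul_apply, smul_eq_mul]
  rw [hfun, ((hasDerivAt_mul_const _).add_const _).deriv]

end Deriv

section Key
variable {N : ℕ} (a : Fin N → ℝ) (τ : ℝ) (p q : ℝ → Fin N → ℂ)
  (hp0 : Differentiable ℝ p) (hp1 : Differentiable ℝ (deriv p))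
  (hp2 : Differentiable ℝ (deriv (deriv p)))
  (hq0 : Differentiable ℝ q) (hq1 : Differentiable ℝ (deriv q))
  (hq2 : Differentiable ℝ (deriv (deriv q)))

include hp0 hp1 hp2 hq0 in
private lemma key_tr (μ : ℂ) (s : ℝ) (j : Fin N) :
    deriv (fun u => B N a τ p q μ u (Sum.inl 0) (Sum.inr j)) s
      - deriv (fun z => A N p q z s (Sum.inl 0) (Sum.inr j)) μ
      - (A N p q μ s * B N a τ p q μ s - B N a τ p q μ s * A N p q μ s) (Sum.inl 0) (Sum.inr j)
    = -(deriv (deriv (deriv p)) s j + 3 * (∑ k, deriv p s k * q s k) * p s j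
        + 3 * (∑ k, p s k * q s k) * deriv p s j - (τ:ℂ) * deriv p s j
        + (((a j : ℝ):ℂ) + (s:ℂ)) * p s j) := by
  rw [derivB_tr a τ p q hp0 hp1 hp2 hq0 μ s j, derivA p q μ s]
  simp only [Matrix.sub_apply, Matrix.mul_apply, Fintype.sum_sum_type, Fin.sum_univ_one,
    A, B, A1, A0, B1, B0, Btilde0, Matrix.add_apply, Matrix.smul_apply,
    Matrix.fromBlocks_apply₁₁, Matrix.fromBlocks_apply₁₂, Matrix.fromBlocks_apply₂₁,
    Matrix.fromBlocks_apply₂₂, Matrix.of_apply, Matrix.diagonal_apply, Matrix.one_apply,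
    Matrix.zero_apply, smul_eq_mul, Pi.zero_apply, mul_zero, zero_mul, add_zero, zero_add,
    mul_one, mul_neg, neg_zero, if_pos rfl, if_true]
  have hN1 : ((N:ℂ) + 1) ≠ 0 := by
    have : ((N:ℂ) + 1) = ((N + 1 : ℕ) : ℂ) := by push_cast; ring
    rw [this]
    exact_mod_cast Nat.succ_ne_zero N
  have step1 : ∀ x ∈ (Finset.univ : Finset (Fin N)),
      p s x *
        ((-μ ^ 3 * (((N:ℂ) + 1)⁻¹ * if x = j then 1 else 0) +
            μ * ((τ:ℂ) * (((N:ℂ) + 1)⁻¹ * if x = j then 1 else 0) + -(q s x * p s j)) +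
            (s:ℂ) * (((N:ℂ) + 1)⁻¹ * if x = j then 1 else 0) +
            if x = j then (((N:ℂ) + 1) * ((a x : ℝ):ℂ) - ∑ k, ((a k : ℝ):ℂ)) / ((N:ℂ) + 1) else 0) +
          (q s x * deriv p s j - deriv q s x * p s j)) =
      (if x = j then p s x * (-μ ^ 3 * ((N:ℂ) + 1)⁻¹ + μ * (τ:ℂ) * ((N:ℂ) + 1)⁻¹
          + (s:ℂ) * ((N:ℂ) + 1)⁻¹
          + (((N:ℂ) + 1) * ((a x : ℝ):ℂ) - ∑ k, ((a k : ℝ):ℂ)) / ((N:ℂ) + 1)) else 0)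
        + (p s x * q s x * (deriv p s j - μ * p s j) + p s x * deriv q s x * (-(p s j))) := by
    intro x _
    rcases eq_or_ne x j with rfl | h
    · simp only [if_pos rfl, if_true, eq_self_iff_true]; ring
    · simp only [if_neg h, mul_zero, zero_add, add_zero, mul_one]; ring
  have step2 : ∀ x ∈ (Finset.univ : Finset (Fin N)),
      (-μ ^ 2 * p s x + μ * deriv p s x +
          (-deriv (deriv p) s x - (2 * ∑ i : Fin N, p s i * q s i) * p s x + (τ:ℂ) * p s x)) *
        (μ * (((N:ℂ) + 1)⁻¹ * if x = j then 1 else 0)) =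
      (if x = j then (-μ ^ 2 * p s x + μ * deriv p s x +
          (-deriv (deriv p) s x - (2 * ∑ i : Fin N, p s i * q s i) * p s x + (τ:ℂ) * p s x)) *
          (μ * ((N:ℂ) + 1)⁻¹) else 0) := by
    intro x _
    rcases eq_or_ne x j with rfl | h
    · simp
    · simp [h]
  rw [Finset.sum_congr rfl step1, Finset.sum_congr rfl step2]
  simp only [Finset.sum_add_distrib, Finset.sum_sub_distrib, Finset.sum_ite_eq',
    Finset.mem_univ, if_true, ← Finset.sum_mul]
  have hv : ((N:ℂ) + 1) * ((N:ℂ) + 1)⁻¹ = 1 := mul_inv_cancel₀ hN1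
  simp only [div_eq_mul_inv]
  linear_combination (μ^2 * deriv p s j - μ * deriv (deriv p) s j
    - 2 * μ * (∑ i, p s i * q s i) * p s j
    - (((a j : ℝ):ℂ) + (s:ℂ)) * p s j) * hv

include hq0 hq1 hq2 hp0 in
private lemma key_bl (μ : ℂ) (s : ℝ) (i : Fin N) :
    deriv (fun u => B N a τ p q μ u (Sum.inr i) (Sum.inl 0)) s
      - deriv (fun z => A N p q z s (Sum.inr i) (Sum.inl 0)) μ
      - (A N p q μ s * B N a τ p q μ s - B N a τ p q μ s * A N p q μ s) (Sum.inr i) (Sum.inl 0)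
    = deriv (deriv (deriv q)) s i + 3 * (∑ k, p s k * deriv q s k) * q s i
        + 3 * (∑ k, p s k * q s k) * deriv q s i - (τ:ℂ) * deriv q s i
        - (((a i : ℝ):ℂ) + (s:ℂ)) * q s i := by
  rw [derivB_bl a τ p q hp0 hq0 hq1 hq2 μ s i, derivA p q μ s]
  simp only [Matrix.sub_apply, Matrix.mul_apply, Fintype.sum_sum_type, Fin.sum_univ_one,
    A, B, A1, A0, B1, B0, Btilde0, Matrix.add_apply, Matrix.smul_apply,
    Matrix.fromBlocks_apply₁₁, Matrix.fromBlocks_apply₁₂, Matrix.fromBlocks_apply₂₁,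
    Matrix.fromBlocks_apply₂₂, Matrix.of_apply, Matrix.diagonal_apply, Matrix.one_apply,
    Matrix.zero_apply, smul_eq_mul, Pi.zero_apply, mul_zero, zero_mul, add_zero, zero_add,
    mul_one, mul_neg, neg_zero, if_pos rfl, if_true]
  have hN1 : ((N:ℂ) + 1) ≠ 0 := by
    have : ((N:ℂ) + 1) = ((N + 1 : ℕ) : ℂ) := by push_cast; ring
    rw [this]
    exact_mod_cast Nat.succ_ne_zero N
  have hv : ((N:ℂ) + 1) * ((N:ℂ) + 1)⁻¹ = 1 := mul_inv_cancel₀ hN1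
  have step1 : ∀ x ∈ (Finset.univ : Finset (Fin N)),
      μ * (((N:ℂ) + 1)⁻¹ * if i = x then 1 else 0) *
        (-(-μ ^ 2 * q s x) + μ * deriv q s x +
          (deriv (deriv q) s x + (2 * ∑ k : Fin N, p s k * q s k) * q s x - (τ:ℂ) * q s x)) =
      (if i = x then μ * ((N:ℂ) + 1)⁻¹ *
        (-(-μ ^ 2 * q s x) + μ * deriv q s x +
          (deriv (deriv q) s x + (2 * ∑ k : Fin N, p s k * q s k) * q s x - (τ:ℂ) * q s x))
        else 0) := by
    intro x _
    rcases eq_or_ne i x with rfl | h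
    · simp
    · simp [h]
  have step2 : ∀ x ∈ (Finset.univ : Finset (Fin N)),
      -(((-μ ^ 3 * (((N:ℂ) + 1)⁻¹ * if i = x then 1 else 0) +
            μ * ((τ:ℂ) * (((N:ℂ) + 1)⁻¹ * if i = x then 1 else 0) + -(q s i * p s x)) +
            (s:ℂ) * (((N:ℂ) + 1)⁻¹ * if i = x then 1 else 0) +
            if i = x then (((N:ℂ) + 1) * ((a i : ℝ):ℂ) - ∑ k, ((a k : ℝ):ℂ)) / ((N:ℂ) + 1) else 0) +
          (q s i * deriv p s x - deriv q s i * p s x)) * q s x) =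
      (if i = x then -((-μ ^ 3 * ((N:ℂ) + 1)⁻¹ + μ * (τ:ℂ) * ((N:ℂ) + 1)⁻¹
          + (s:ℂ) * ((N:ℂ) + 1)⁻¹
          + (((N:ℂ) + 1) * ((a i : ℝ):ℂ) - ∑ k, ((a k : ℝ):ℂ)) / ((N:ℂ) + 1)) * q s x) else 0)
        + (p s x * q s x * (μ * q s i + deriv q s i) + deriv p s x * q s x * (-(q s i))) := by
    intro x _
    rcases eq_or_ne i x with rfl | h
    · simp only [if_pos rfl, if_true, eq_self_iff_true]; ring
    · simp only [if_neg h, mul_zero, zero_add, add_zero, mul_one]; ring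
  rw [Finset.sum_congr rfl step1, Finset.sum_congr rfl step2]
  simp only [Finset.sum_add_distrib, Finset.sum_sub_distrib, Finset.sum_ite_eq', Finset.sum_ite_eq,
    Finset.mem_univ, if_true, ← Finset.sum_mul]
  simp only [div_eq_mul_inv]
  linear_combination (-(μ^2 * deriv q s i) - μ * deriv (deriv q) s i
    - 2 * μ * (∑ k, p s k * q s k) * q s i
    - (((a i : ℝ):ℂ) + (s:ℂ)) * q s i) * hv

include hp0 hp1 hq0 hq1 in
private lemma key_tl (μ : ℂ) (s : ℝ) :
    deriv (fun u => B N a τ p q μ u (Sum.inl 0) (Sum.inl 0)) s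
      - deriv (fun z => A N p q z s (Sum.inl 0) (Sum.inl 0)) μ
      - (A N p q μ s * B N a τ p q μ s - B N a τ p q μ s * A N p q μ s) (Sum.inl 0) (Sum.inl 0)
    = 0 := by
  rw [derivB_tl a τ p q hp0 hp1 hq0 hq1 μ s, derivA p q μ s]
  simp only [Matrix.sub_apply, Matrix.mul_apply, Fintype.sum_sum_type, Fin.sum_univ_one,
    A, B, A1, A0, B1, B0, Btilde0, Matrix.add_apply, Matrix.smul_apply,
    Matrix.fromBlocks_apply₁₁, Matrix.fromBlocks_apply₁₂, Matrix.fromBlocks_apply₂₁,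
    Matrix.fromBlocks_apply₂₂, Matrix.of_apply, Matrix.diagonal_apply, Matrix.one_apply,
    Matrix.zero_apply, smul_eq_mul, Pi.zero_apply, mul_zero, zero_mul, add_zero, zero_add,
    mul_one, mul_neg, neg_zero, if_pos rfl, if_true]
  have step1 : ∀ x ∈ (Finset.univ : Finset (Fin N)),
      p s x *
        (-(-μ ^ 2 * q s x) + μ * deriv q s x +
          (deriv (deriv q) s x + (2 * ∑ k : Fin N, p s k * q s k) * q s x - (τ:ℂ) * q s x)) =
      p s x * q s x * (μ ^ 2 + 2 * (∑ k : Fin N, p s k * q s k) - (τ:ℂ))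
        + p s x * deriv q s x * μ + p s x * deriv (deriv q) s x := by
    intro x _; ring
  have step2 : ∀ x ∈ (Finset.univ : Finset (Fin N)),
      -((-μ ^ 2 * p s x + μ * deriv p s x +
          (-deriv (deriv p) s x - (2 * ∑ k : Fin N, p s k * q s k) * p s x + (τ:ℂ) * p s x)) *
        q s x) =
      p s x * q s x * (μ ^ 2 + 2 * (∑ k : Fin N, p s k * q s k) - (τ:ℂ))
        + deriv p s x * q s x * (-μ) + deriv (deriv p) s x * q s x := by
    intro x _; ring
  rw [Finset.sum_congr rfl step1, Finset.sum_congr rfl step2]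
  simp only [Finset.sum_add_distrib, Finset.sum_sub_distrib, ← Finset.sum_mul]
  ring

include hp0 hp1 hq0 hq1 in
private lemma key_br (μ : ℂ) (s : ℝ) (i j : Fin N) :
    deriv (fun u => B N a τ p q μ u (Sum.inr i) (Sum.inr j)) s
      - deriv (fun z => A N p q z s (Sum.inr i) (Sum.inr j)) μ
      - (A N p q μ s * B N a τ p q μ s - B N a τ p q μ s * A N p q μ s) (Sum.inr i) (Sum.inr j)
    = 0 := by
  rw [derivB_br a τ p q hp0 hp1 hq0 hq1 μ s i j, derivA p q μ s]
  simp only [Matrix.sub_apply, Matrix.mul_apply, Fintype.sum_sum_type, Fin.sum_univ_one,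
    A, B, A1, A0, B1, B0, Btilde0, Matrix.add_apply, Matrix.smul_apply,
    Matrix.fromBlocks_apply₁₁, Matrix.fromBlocks_apply₁₂, Matrix.fromBlocks_apply₂₁,
    Matrix.fromBlocks_apply₂₂, Matrix.of_apply, Matrix.diagonal_apply, Matrix.one_apply,
    Matrix.zero_apply, smul_eq_mul, Pi.zero_apply, mul_zero, zero_mul, add_zero, zero_add,
    mul_one, mul_neg, neg_zero, if_pos rfl, if_true]
  rcases eq_or_ne i j with rfl | hij
  · have step1 : ∀ x ∈ (Finset.univ : Finset (Fin N)),
        μ * (((N:ℂ) + 1)⁻¹ * if i = x then 1 else 0) *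
          ((-μ ^ 3 * (((N:ℂ) + 1)⁻¹ * if x = i then 1 else 0) +
              μ * ((τ:ℂ) * (((N:ℂ) + 1)⁻¹ * if x = i then 1 else 0) + -(q s x * p s i)) +
              (s:ℂ) * (((N:ℂ) + 1)⁻¹ * if x = i then 1 else 0) +
              if x = i then (((N:ℂ) + 1) * ((a x : ℝ):ℂ) - ∑ k, ((a k : ℝ):ℂ)) / ((N:ℂ) + 1) else 0) +
            (q s x * deriv p s i - deriv q s x * p s i)) =
        (if i = x then μ * (((N:ℂ) + 1)⁻¹) *
          ((-μ ^ 3 * (((N:ℂ) + 1)⁻¹) +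
              μ * ((τ:ℂ) * (((N:ℂ) + 1)⁻¹) + -(q s x * p s i)) +
              (s:ℂ) * (((N:ℂ) + 1)⁻¹) +
              (((N:ℂ) + 1) * ((a x : ℝ):ℂ) - ∑ k, ((a k : ℝ):ℂ)) / ((N:ℂ) + 1)) +
            (q s x * deriv p s i - deriv q s x * p s i)) else 0) := by
      intro x _
      rcases eq_or_ne i x with rfl | h1
      · simp
      · simp [h1, Ne.symm h1]
    have step2 : ∀ x ∈ (Finset.univ : Finset (Fin N)),
        ((-μ ^ 3 * (((N:ℂ) + 1)⁻¹ * if i = x then 1 else 0) +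
              μ * ((τ:ℂ) * (((N:ℂ) + 1)⁻¹ * if i = x then 1 else 0) + -(q s i * p s x)) +
              (s:ℂ) * (((N:ℂ) + 1)⁻¹ * if i = x then 1 else 0) +
              if i = x then (((N:ℂ) + 1) * ((a i : ℝ):ℂ) - ∑ k, ((a k : ℝ):ℂ)) / ((N:ℂ) + 1) else 0) +
            (q s i * deriv p s x - deriv q s i * p s x)) *
          (μ * (((N:ℂ) + 1)⁻¹ * if x = i then 1 else 0)) =
        (if i = x then ((-μ ^ 3 * (((N:ℂ) + 1)⁻¹) +
              μ * ((τ:ℂ) * (((N:ℂ) + 1)⁻¹) + -(q s i * p s x)) +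
              (s:ℂ) * (((N:ℂ) + 1)⁻¹) +
              (((N:ℂ) + 1) * ((a i : ℝ):ℂ) - ∑ k, ((a k : ℝ):ℂ)) / ((N:ℂ) + 1)) +
            (q s i * deriv p s x - deriv q s i * p s x)) *
          (μ * (((N:ℂ) + 1)⁻¹)) else 0) := by
      intro x _
      rcases eq_or_ne i x with rfl | h1
      · simp
      · simp [h1, Ne.symm h1]
    rw [Finset.sum_congr rfl step1, Finset.sum_congr rfl step2]
    simp only [Finset.sum_ite_eq, Finset.mem_univ, if_true, if_pos rfl]
    ring
  · have step1 : ∀ x ∈ (Finset.univ : Finset (Fin N)),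
        μ * (((N:ℂ) + 1)⁻¹ * if i = x then 1 else 0) *
          ((-μ ^ 3 * (((N:ℂ) + 1)⁻¹ * if x = j then 1 else 0) +
              μ * ((τ:ℂ) * (((N:ℂ) + 1)⁻¹ * if x = j then 1 else 0) + -(q s x * p s j)) +
              (s:ℂ) * (((N:ℂ) + 1)⁻¹ * if x = j then 1 else 0) +
              if x = j then (((N:ℂ) + 1) * ((a x : ℝ):ℂ) - ∑ k, ((a k : ℝ):ℂ)) / ((N:ℂ) + 1) else 0) +
            (q s x * deriv p s j - deriv q s x * p s j)) =
        (if i = x then μ * (((N:ℂ) + 1)⁻¹) *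
            (μ * -(q s x * p s j) + (q s x * deriv p s j - deriv q s x * p s j)) else 0) := by
      intro x _
      rcases eq_or_ne i x with rfl | h1
      · simp [hij]
      · simp [h1]
    have step2 : ∀ x ∈ (Finset.univ : Finset (Fin N)),
        ((-μ ^ 3 * (((N:ℂ) + 1)⁻¹ * if i = x then 1 else 0) +
              μ * ((τ:ℂ) * (((N:ℂ) + 1)⁻¹ * if i = x then 1 else 0) + -(q s i * p s x)) +
              (s:ℂ) * (((N:ℂ) + 1)⁻¹ * if i = x then 1 else 0) +
              if i = x then (((N:ℂ) + 1) * ((a i : ℝ):ℂ) - ∑ k, ((a k : ℝ):ℂ)) / ((N:ℂ) + 1) else 0) +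
            (q s i * deriv p s x - deriv q s i * p s x)) *
          (μ * (((N:ℂ) + 1)⁻¹ * if x = j then 1 else 0)) =
        (if x = j then (μ * -(q s i * p s x) + (q s i * deriv p s x - deriv q s i * p s x)) *
            (μ * (((N:ℂ) + 1)⁻¹)) else 0) := by
      intro x _
      rcases eq_or_ne x j with rfl | h2
      · simp [hij]
      · simp [h2]
    rw [Finset.sum_congr rfl step1, Finset.sum_congr rfl step2]
    simp only [Finset.sum_ite_eq, Finset.sum_ite_eq', Finset.mem_univ, if_true, if_neg hij]
    ring
end Key

/-- the zero-curvature equation `∂ₛB − ∂_μ A = [A, B]` holds for all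
`μ ∈ ℂ`, `s ∈ ℝ` if and only if `p` and `q` satisfy the coupled third-order system
`∂ₛₛₛp + 3(∂ₛpᵀq)p + 3(pᵀq)∂ₛp − τ∂ₛp + D(s)p = 0`,
`∂ₛₛₛq + 3(pᵀ∂ₛq)q + 3(pᵀq)∂ₛq − τ∂ₛq − D(s)q = 0`, with `D(s) = diag(a₁+s, …, a_N+s)`. -/
theorem zero_curvature_iff_coupled_system
    (hN : 1 ≤ N) (a : Fin N → ℝ) (τ : ℝ)
    (p q : ℝ → Fin N → ℂ) (hp : ContDiff ℝ (⊤ : ℕ∞) p) (hq : ContDiff ℝ (⊤ : ℕ∞) q) :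
    (∀ (μ : ℂ) (s : ℝ),
        (Matrix.of fun i j => deriv (fun u : ℝ => B N a τ p q μ u i j) s)
          - (Matrix.of fun i j => deriv (fun z : ℂ => A N p q z s i j) μ)
        = A N p q μ s * B N a τ p q μ s - B N a τ p q μ s * A N p q μ s)
      ↔
    (∀ s : ℝ,
        (∀ i, deriv (deriv (deriv p)) s i
            + 3 * (∑ j, deriv p s j * q s j) * p s i
            + 3 * (∑ j, p s j * q s j) * deriv p s i
            - (τ : ℂ) * deriv p s i + ((a i : ℂ) + (s : ℂ)) * p s i = 0)
        ∧ (∀ i, deriv (deriv (deriv q)) s i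
            + 3 * (∑ j, p s j * deriv q s j) * q s i
            + 3 * (∑ j, p s j * q s j) * deriv q s i
            - (τ : ℂ) * deriv q s i - ((a i : ℂ) + (s : ℂ)) * q s i = 0)) := by
  have h0p : ContDiff ℝ (⊤:ℕ∞) p := hp.of_le (by simp)
  have h0q : ContDiff ℝ (⊤:ℕ∞) q := hq.of_le (by simp)
  have h1p := (contDiff_infty_iff_deriv.mp h0p).2
  have h1q := (contDiff_infty_iff_deriv.mp h0q).2
  have h2p := (contDiff_infty_iff_deriv.mp h1p).2
  have h2q := (contDiff_infty_iff_deriv.mp h1q).2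
  have hp0 : Differentiable ℝ p := (contDiff_infty_iff_deriv.mp h0p).1
  have hq0 : Differentiable ℝ q := (contDiff_infty_iff_deriv.mp h0q).1
  have hp1 : Differentiable ℝ (deriv p) := (contDiff_infty_iff_deriv.mp h1p).1
  have hq1 : Differentiable ℝ (deriv q) := (contDiff_infty_iff_deriv.mp h1q).1
  have hp2 : Differentiable ℝ (deriv (deriv p)) := (contDiff_infty_iff_deriv.mp h2p).1
  have hq2 : Differentiable ℝ (deriv (deriv q)) := (contDiff_infty_iff_deriv.mp h2q).1
  constructor
  · intro h s
    refine ⟨fun i => ?_, fun i => ?_⟩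
    · have hk := key_tr a τ p q hp0 hp1 hp2 hq0 0 s i
      have he := congrFun (congrFun (h 0 s) (Sum.inl 0)) (Sum.inr i)
      simp only [Matrix.sub_apply, Matrix.of_apply] at he hk
      linear_combination hk - he
    · have hk := key_bl a τ p q hp0 hq0 hq1 hq2 0 s i
      have he := congrFun (congrFun (h 0 s) (Sum.inr i)) (Sum.inl 0)
      simp only [Matrix.sub_apply, Matrix.of_apply] at he hk
      linear_combination -hk + he
  · intro h μ s
    ext i j
    simp only [Matrix.sub_apply, Matrix.of_apply]
    rcases i with i | i <;> rcases j with j | j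
    · obtain rfl : i = 0 := Subsingleton.elim i 0
      obtain rfl : j = 0 := Subsingleton.elim j 0
      have hk := key_tl a τ p q hp0 hp1 hq0 hq1 μ s
      simp only [Matrix.sub_apply] at hk
      linear_combination hk
    · obtain rfl : i = 0 := Subsingleton.elim i 0
      have hk := key_tr a τ p q hp0 hp1 hp2 hq0 μ s j
      simp only [Matrix.sub_apply] at hk
      have hE := (h s).1 j
      linear_combination hk - hE
    · obtain rfl : j = 0 := Subsingleton.elim j 0
      have hk := key_bl a τ p q hp0 hq0 hq1 hq2 μ s i
      simp only [Matrix.sub_apply] at hk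
      have hE := (h s).2 i
      linear_combination hk + hE
    · have hk := key_br a τ p q hp0 hp1 hq0 hq1 μ s i j
      simp only [Matrix.sub_apply] at hk
      linear_combination hk


end PearceyLax
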